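/- Nontrivial terminal multiplier forces positive L¹ mass: suppose η = 0 and γ ∈ ℝ^m with γ_j < 0 for some j, and suppose a measurable control v* : [0,T] → [0,1]^m satisfies, for a.e. t, v*(t) ∈ argmax_{v ∈ 𝕍} Σ_k (η f_k(t) + γ_k) v_k where 𝕍 = {v ∈ [0,1]^m : Σ_k v_k ≤ β} with β ≥ 1. Then v*_j(t) = 0 for a.e. t, hence ∫₀ᵀ v*_j(t) dt = 0 < α_j, so the complementary slackness condition γ_j(∫₀ᵀ v*_j − α_j) = 0 fails; therefore η = 1 in the maximum principle. -/
import Mathlib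


open MeasureTheory

theorem stmt_17 (T : ℝ) (hT : 0 < T) (m : ℕ) (β : ℕ)
    (hβ : 1 ≤ β ∧ β ≤ m - 1)
    (α : Fin m → ℝ) (hα : ∀ j, α j ∈ Set.Ioc 0 T)
    (f : Fin m → ℝ → ℝ) (hf : ∀ j, Continuous (f j))
    (𝕍 : Set (Fin m → ℝ))
    (h𝕍 : 𝕍 = {v : Fin m → ℝ | (∀ k, v k ∈ Set.Icc (0:ℝ) 1) ∧ ∑ k, v k ≤ β})
    (η : ℝ) (hη : η = 0)
    (γ : Fin m → ℝ) (j₀ : Fin m) (hγ : γ j₀ < 0)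
    (vstar : ℝ → Fin m → ℝ) (hmeas : Measurable vstar)
    (hval : ∀ᵐ t ∂(volume.restrict (Set.Icc (0:ℝ) T)), ∀ k, vstar t k ∈ Set.Icc (0:ℝ) 1)
    (hmax : ∀ᵐ t ∂(volume.restrict (Set.Icc (0:ℝ) T)),
      vstar t ∈ 𝕍 ∧ ∀ w ∈ 𝕍,
        ∑ k, (η * f k t + γ k) * w k ≤ ∑ k, (η * f k t + γ k) * vstar t k) :
    (∀ᵐ t ∂(volume.restrict (Set.Icc (0:ℝ) T)), vstar t j₀ = 0) ∧
    (∫ t in Set.Icc (0:ℝ) T, vstar t j₀) = 0 ∧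
    γ j₀ * ((∫ t in Set.Icc (0:ℝ) T, vstar t j₀) - α j₀) ≠ 0 := by
  have hae : ∀ᵐ t ∂(volume.restrict (Set.Icc (0:ℝ) T)), vstar t j₀ = 0 := by
    filter_upwards [hmax] with t ht
    obtain ⟨hv𝕍, hopt⟩ := ht
    rw [h𝕍] at hv𝕍
    obtain ⟨hvIcc, hvsum⟩ := hv𝕍
    set w : Fin m → ℝ := Function.update (vstar t) j₀ 0 with hw
    have hw𝕍 : w ∈ 𝕍 := by
      rw [h𝕍]
      constructor
      · intro k
        by_cases hk : k = j₀
        · subst hk; simp [hw]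
        · simp [hw, Function.update_of_ne hk]; exact hvIcc k
      · calc ∑ k, w k ≤ ∑ k, vstar t k := by
              apply Finset.sum_le_sum
              intro k _
              by_cases hk : k = j₀
              · subst hk; simp [hw]; exact (hvIcc k).1
              · simp [hw, Function.update_of_ne hk]
            _ ≤ β := hvsum
    have hineq := hopt w hw𝕍
    rw [hη] at hineq
    simp only [zero_mul, zero_add] at hineq
    have hsum : ∑ k, γ k * w k = ∑ k, γ k * vstar t k - γ j₀ * vstar t j₀ := by
      rw [← Finset.sum_erase_add _ _ (Finset.mem_univ j₀),
          ← Finset.sum_erase_add _ (fun k => γ k * vstar t k) (Finset.mem_univ j₀)]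
      have : ∑ k ∈ Finset.univ.erase j₀, γ k * w k
          = ∑ k ∈ Finset.univ.erase j₀, γ k * vstar t k := by
        apply Finset.sum_congr rfl
        intro k hk
        rw [hw, Function.update_of_ne (Finset.ne_of_mem_erase hk)]
      rw [this, hw]
      simp
    rw [hsum] at hineq
    have h0 : 0 ≤ γ j₀ * vstar t j₀ := by linarith
    have hv0 : 0 ≤ vstar t j₀ := (hvIcc j₀).1
    nlinarith
  refine ⟨hae, ?_, ?_⟩
  · have : (∫ t in Set.Icc (0:ℝ) T, vstar t j₀) = ∫ t in Set.Icc (0:ℝ) T, (0:ℝ) :=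
      integral_congr_ae hae
    simpa using this
  · have hint : (∫ t in Set.Icc (0:ℝ) T, vstar t j₀) = 0 := by
      have : (∫ t in Set.Icc (0:ℝ) T, vstar t j₀) = ∫ t in Set.Icc (0:ℝ) T, (0:ℝ) :=
        integral_congr_ae hae
      simpa using this
    rw [hint]
    have hα0 := (hα j₀).1
    intro h
    rcases mul_eq_zero.mp h with h | h
    · linarith
    · linarith
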